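/- Let T : D(T) ⊆ H₁ → H₂ be a densely defined closed operator, E = [[0,T*],[T,0]], and λ ≠ 0. Then the geometric multiplicity of λ as an eigenvalue of E equals the geometric multiplicity of λ² as an eigenvalue of TT*, and also equals the geometric multiplicity of λ² as an eigenvalue of T*T. -/
import Mathlib


open LinearPMap

universe u

variable {H₁ H₂ : Type u}
  [NormedAddCommGroup H₁] [InnerProductSpace ℂ H₁] [CompleteSpace H₁]
  [NormedAddCommGroup H₂] [InnerProductSpace ℂ H₂] [CompleteSpace H₂]

/-- The block operator matrix `E = [[0, T*], [T, 0]]` acting on the Hilbert space direct sum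
`H₁ ⊕ H₂` (realised as `WithLp 2 (H₁ × H₂)`), with domain `D(T) ⊕ D(T*)`, acting by
`E (u, v) = (T* v, T u)`. -/
noncomputable def blockOp (T : H₁ →ₗ.[ℂ] H₂) :
    (WithLp 2 (H₁ × H₂)) →ₗ.[ℂ] (WithLp 2 (H₁ × H₂)) where
  domain := (T.domain.prod T.adjoint.domain).comap
      (WithLp.linearEquiv 2 ℂ (H₁ × H₂)).toLinearMap
  toFun :=
    (WithLp.linearEquiv 2 ℂ (H₁ × H₂)).symm.toLinearMap.comp <|
      LinearMap.prod
        (T.adjoint.toFun.comp <|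
          LinearMap.codRestrict T.adjoint.domain
            ((LinearMap.snd ℂ H₁ H₂).comp <|
              (WithLp.linearEquiv 2 ℂ (H₁ × H₂)).toLinearMap.comp
                ((T.domain.prod T.adjoint.domain).comap
                  (WithLp.linearEquiv 2 ℂ (H₁ × H₂)).toLinearMap).subtype)
            (fun c => c.2.2))
        (T.toFun.comp <|
          LinearMap.codRestrict T.domain
            ((LinearMap.fst ℂ H₁ H₂).comp <|
              (WithLp.linearEquiv 2 ℂ (H₁ × H₂)).toLinearMap.comp
                ((T.domain.prod T.adjoint.domain).comap
                  (WithLp.linearEquiv 2 ℂ (H₁ × H₂)).toLinearMap).subtype)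
            (fun c => c.2.1))

/-- `μ` is an eigenvalue of the partially defined operator `A`. -/
def LinearPMap.HasEigenvalue {E : Type*} [NormedAddCommGroup E] [InnerProductSpace ℂ E]
    (A : E →ₗ.[ℂ] E) (μ : ℂ) : Prop :=
  ∃ x : A.domain, (x : E) ≠ 0 ∧ A x = μ • (x : E)

/-- `μ` is an eigenvalue of `T T*` (the product being taken on its natural domain
`{v ∈ D(T*) : T* v ∈ D(T)}`). -/
def hasEigenvalueTTstar (T : H₁ →ₗ.[ℂ] H₂) (μ : ℂ) : Prop :=
  ∃ v : T.adjoint.domain, (v : H₂) ≠ 0 ∧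
    ∃ h : T.adjoint v ∈ T.domain, T ⟨T.adjoint v, h⟩ = μ • (v : H₂)

/-- `μ` is an eigenvalue of `T* T` (the product being taken on its natural domain
`{u ∈ D(T) : T u ∈ D(T*)}`). -/
def hasEigenvalueTstarT (T : H₁ →ₗ.[ℂ] H₂) (μ : ℂ) : Prop :=
  ∃ u : T.domain, (u : H₁) ≠ 0 ∧
    ∃ h : T u ∈ T.adjoint.domain, T.adjoint ⟨T u, h⟩ = μ • (u : H₁)

/-- The eigenspace of a partially defined operator `A` at `μ`, as a submodule:
`x` belongs to it iff `x ∈ D(A)` and `A x = μ • x` (expressed via the graph of `A`). -/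
def LinearPMap.eigenspace {E : Type*} [NormedAddCommGroup E] [InnerProductSpace ℂ E]
    (A : E →ₗ.[ℂ] E) (μ : ℂ) : Submodule ℂ E where
  carrier := {x | (x, μ • x) ∈ A.graph}
  zero_mem' := by show (0, μ • (0 : E)) ∈ A.graph; rw [smul_zero]; exact A.graph.zero_mem
  add_mem' := by
    intro x y hx hy
    simpa [smul_add] using A.graph.add_mem hx hy
  smul_mem' := by
    intro c x hx
    simpa [smul_comm μ c] using A.graph.smul_mem c hx

/-- The eigenspace of `T T*` at `μ`, as a submodule of `H₂`:
`v` belongs to it iff `v ∈ D(T*)`, `T* v ∈ D(T)` and `T (T* v) = μ • v`. -/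
def eigenspaceTTstar (T : H₁ →ₗ.[ℂ] H₂) (μ : ℂ) : Submodule ℂ H₂ where
  carrier := {v | ∃ w, (v, w) ∈ T.adjoint.graph ∧ (w, μ • v) ∈ T.graph}
  zero_mem' := ⟨0, by simpa using T.adjoint.graph.zero_mem, by simpa using T.graph.zero_mem⟩
  add_mem' := by
    rintro v v' ⟨w, h1, h2⟩ ⟨w', h1', h2'⟩
    exact ⟨w + w', by simpa using T.adjoint.graph.add_mem h1 h1',
      by simpa [smul_add] using T.graph.add_mem h2 h2'⟩
  smul_mem' := by
    rintro c v ⟨w, h1, h2⟩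
    exact ⟨c • w, by simpa using T.adjoint.graph.smul_mem c h1,
      by simpa [smul_comm μ c] using T.graph.smul_mem c h2⟩

/-- The eigenspace of `T* T` at `μ`, as a submodule of `H₁`:
`u` belongs to it iff `u ∈ D(T)`, `T u ∈ D(T*)` and `T* (T u) = μ • u`. -/
def eigenspaceTstarT (T : H₁ →ₗ.[ℂ] H₂) (μ : ℂ) : Submodule ℂ H₁ where
  carrier := {u | ∃ w, (u, w) ∈ T.graph ∧ (w, μ • u) ∈ T.adjoint.graph}
  zero_mem' := ⟨0, by simpa using T.graph.zero_mem, by simpa using T.adjoint.graph.zero_mem⟩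
  add_mem' := by
    rintro v v' ⟨w, h1, h2⟩ ⟨w', h1', h2'⟩
    exact ⟨w + w', by simpa using T.graph.add_mem h1 h1',
      by simpa [smul_add] using T.adjoint.graph.add_mem h2 h2'⟩
  smul_mem' := by
    rintro c v ⟨w, h1, h2⟩
    exact ⟨c • w, by simpa using T.graph.smul_mem c h1,
      by simpa [smul_comm μ c] using T.adjoint.graph.smul_mem c h2⟩

section Aux

variable (T : H₁ →ₗ.[ℂ] H₂)

lemma graph_zero_fst {E F : Type*} [AddCommGroup E] [Module ℂ E] [AddCommGroup F] [Module ℂ F]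
    (f : E →ₗ.[ℂ] F) {y : F} (h : ((0 : E), y) ∈ f.graph) : y = 0 := by
  rw [LinearPMap.mem_graph_iff] at h
  obtain ⟨d, hd, hy⟩ := h
  have : d = 0 := Subtype.coe_injective (by simpa using hd)
  rw [this] at hy
  simpa using hy.symm

lemma mem_blockOp_graph (x y : WithLp 2 (H₁ × H₂)) :
    (x, y) ∈ (blockOp T).graph ↔
      ((WithLp.equiv 2 (H₁ × H₂) x).2, (WithLp.equiv 2 (H₁ × H₂) y).1) ∈ T.adjoint.graph ∧
      ((WithLp.equiv 2 (H₁ × H₂) x).1, (WithLp.equiv 2 (H₁ × H₂) y).2) ∈ T.graph := by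
  constructor
  · intro h
    rw [LinearPMap.mem_graph_iff] at h
    obtain ⟨d, hd, hy⟩ := h
    simp only at hd hy
    subst hd; subst hy
    have hdom := d.2
    exact ⟨T.adjoint.mem_graph ⟨_, hdom.2⟩, T.mem_graph ⟨_, hdom.1⟩⟩
  · rintro ⟨h1, h2⟩
    rw [LinearPMap.mem_graph_iff] at h1 h2
    obtain ⟨d1, hd1, hy1⟩ := h1
    obtain ⟨d2, hd2, hy2⟩ := h2
    simp only at hd1 hy1 hd2 hy2
    have hx2 : (WithLp.equiv 2 (H₁ × H₂) x).2 ∈ T.adjoint.domain := hd1 ▸ d1.2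
    have hx1 : (WithLp.equiv 2 (H₁ × H₂) x).1 ∈ T.domain := hd2 ▸ d2.2
    have hdom : x ∈ (blockOp T).domain := by
      show x ∈ Submodule.comap _ _
      simp only [Submodule.mem_comap, Submodule.mem_prod]
      exact ⟨hx1, hx2⟩
    rw [LinearPMap.mem_graph_iff]
    refine ⟨⟨x, hdom⟩, rfl, ?_⟩
    show (WithLp.linearEquiv 2 ℂ (H₁ × H₂)).symm
      (T.adjoint ⟨_, hx2⟩, T ⟨_, hx1⟩) = y
    have e1 : T.adjoint ⟨(WithLp.equiv 2 (H₁ × H₂) x).2, hx2⟩ = (WithLp.equiv 2 (H₁ × H₂) y).1 := by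
      rw [← hy1]; congr 1; exact Subtype.ext hd1.symm
    have e2 : T ⟨(WithLp.equiv 2 (H₁ × H₂) x).1, hx1⟩ = (WithLp.equiv 2 (H₁ × H₂) y).2 := by
      rw [← hy2]; congr 1; exact Subtype.ext hd2.symm
    rw [e1, e2]
    rfl

lemma mem_blockOp_eigenspace (lam : ℂ) (x : WithLp 2 (H₁ × H₂)) :
    x ∈ (blockOp T).eigenspace lam ↔
      ((WithLp.equiv 2 (H₁ × H₂) x).2, lam • (WithLp.equiv 2 (H₁ × H₂) x).1) ∈ T.adjoint.graph ∧
      ((WithLp.equiv 2 (H₁ × H₂) x).1, lam • (WithLp.equiv 2 (H₁ × H₂) x).2) ∈ T.graph := by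
  show (x, lam • x) ∈ (blockOp T).graph ↔ _
  rw [mem_blockOp_graph]
  rfl

end Aux

section Main

variable (T : H₁ →ₗ.[ℂ] H₂)

noncomputable def sndMap (lam : ℂ) :
    ((blockOp T).eigenspace lam) →ₗ[ℂ] (eigenspaceTTstar T (lam ^ 2)) where
  toFun x := ⟨(WithLp.equiv 2 (H₁ × H₂) (x : WithLp 2 (H₁ × H₂))).2, by
    obtain ⟨h1, h2⟩ := (mem_blockOp_eigenspace T lam _).mp x.2
    refine ⟨lam • (WithLp.equiv 2 (H₁ × H₂) (x : WithLp 2 (H₁ × H₂))).1, h1, ?_⟩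
    have := T.graph.smul_mem lam h2
    simpa [smul_smul, pow_two] using this⟩
  map_add' x y := rfl
  map_smul' c x := rfl

noncomputable def fstMap (lam : ℂ) :
    ((blockOp T).eigenspace lam) →ₗ[ℂ] (eigenspaceTstarT T (lam ^ 2)) where
  toFun x := ⟨(WithLp.equiv 2 (H₁ × H₂) (x : WithLp 2 (H₁ × H₂))).1, by
    obtain ⟨h1, h2⟩ := (mem_blockOp_eigenspace T lam _).mp x.2
    refine ⟨lam • (WithLp.equiv 2 (H₁ × H₂) (x : WithLp 2 (H₁ × H₂))).2, h2, ?_⟩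
    have := T.adjoint.graph.smul_mem lam h1
    simpa [smul_smul, pow_two] using this⟩
  map_add' x y := rfl
  map_smul' c x := rfl

lemma sndMap_bijective (lam : ℂ) (hlam : lam ≠ 0) : Function.Bijective (sndMap T lam) := by
  constructor
  · intro x y hxy
    have h2 : (WithLp.equiv 2 (H₁ × H₂) (x : WithLp 2 (H₁ × H₂))).2
        = (WithLp.equiv 2 (H₁ × H₂) (y : WithLp 2 (H₁ × H₂))).2 := congrArg Subtype.val hxy
    have hx := (mem_blockOp_eigenspace T lam _).mp x.2
    have hy := (mem_blockOp_eigenspace T lam _).mp y.2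
    -- difference z := x - y has second component 0
    have hz := (mem_blockOp_eigenspace T lam _).mp (((blockOp T).eigenspace lam).sub_mem x.2 y.2)
    set z : WithLp 2 (H₁ × H₂) := (x : WithLp 2 (H₁ × H₂)) - (y : WithLp 2 (H₁ × H₂)) with hzdef
    have hz2 : (WithLp.equiv 2 (H₁ × H₂) z).2 = 0 := by
      show (WithLp.equiv 2 (H₁ × H₂) (x : WithLp 2 (H₁ × H₂))).2
        - (WithLp.equiv 2 (H₁ × H₂) (y : WithLp 2 (H₁ × H₂))).2 = 0
      rw [h2, sub_self]
    have h1 := hz.1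
    rw [hz2] at h1
    have : lam • (WithLp.equiv 2 (H₁ × H₂) z).1 = 0 := graph_zero_fst T.adjoint h1
    have hz1 : (WithLp.equiv 2 (H₁ × H₂) z).1 = 0 := by
      have := smul_eq_zero.mp this
      tauto
    have hz0 : z = 0 := by
      have : WithLp.equiv 2 (H₁ × H₂) z = 0 := Prod.ext hz1 hz2
      simpa using this
    exact Subtype.ext (by rwa [sub_eq_zero] at hz0)
  · rintro ⟨v, w, hw1, hw2⟩
    set x : WithLp 2 (H₁ × H₂) := (WithLp.equiv 2 (H₁ × H₂)).symm (lam⁻¹ • w, v) with hxdef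
    have hx : x ∈ (blockOp T).eigenspace lam := by
      rw [mem_blockOp_eigenspace]
      constructor
      · show (v, lam • lam⁻¹ • w) ∈ T.adjoint.graph
        rw [smul_smul, mul_inv_cancel₀ hlam, one_smul]
        exact hw1
      · show (lam⁻¹ • w, lam • v) ∈ T.graph
        have := T.graph.smul_mem lam⁻¹ hw2
        simpa [smul_smul, pow_two, inv_mul_cancel_left₀ hlam] using this
    exact ⟨⟨x, hx⟩, rfl⟩

lemma fstMap_bijective (lam : ℂ) (hlam : lam ≠ 0) : Function.Bijective (fstMap T lam) := by
  constructor
  · intro x y hxy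
    have h1 : (WithLp.equiv 2 (H₁ × H₂) (x : WithLp 2 (H₁ × H₂))).1
        = (WithLp.equiv 2 (H₁ × H₂) (y : WithLp 2 (H₁ × H₂))).1 := congrArg Subtype.val hxy
    have hz := (mem_blockOp_eigenspace T lam _).mp (((blockOp T).eigenspace lam).sub_mem x.2 y.2)
    set z : WithLp 2 (H₁ × H₂) := (x : WithLp 2 (H₁ × H₂)) - (y : WithLp 2 (H₁ × H₂)) with hzdef
    have hz1 : (WithLp.equiv 2 (H₁ × H₂) z).1 = 0 := by
      show (WithLp.equiv 2 (H₁ × H₂) (x : WithLp 2 (H₁ × H₂))).1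
        - (WithLp.equiv 2 (H₁ × H₂) (y : WithLp 2 (H₁ × H₂))).1 = 0
      rw [h1, sub_self]
    have h2 := hz.2
    rw [hz1] at h2
    have : lam • (WithLp.equiv 2 (H₁ × H₂) z).2 = 0 := graph_zero_fst T h2
    have hz2 : (WithLp.equiv 2 (H₁ × H₂) z).2 = 0 := by
      have := smul_eq_zero.mp this
      tauto
    have hz0 : z = 0 := by
      have : WithLp.equiv 2 (H₁ × H₂) z = 0 := Prod.ext hz1 hz2
      simpa using this
    exact Subtype.ext (by rwa [sub_eq_zero] at hz0)
  · rintro ⟨u, w, hw1, hw2⟩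
    set x : WithLp 2 (H₁ × H₂) := (WithLp.equiv 2 (H₁ × H₂)).symm (u, lam⁻¹ • w) with hxdef
    have hx : x ∈ (blockOp T).eigenspace lam := by
      rw [mem_blockOp_eigenspace]
      constructor
      · show (lam⁻¹ • w, lam • u) ∈ T.adjoint.graph
        have := T.adjoint.graph.smul_mem lam⁻¹ hw2
        simpa [smul_smul, pow_two, inv_mul_cancel_left₀ hlam] using this
      · show (u, lam • lam⁻¹ • w) ∈ T.graph
        rw [smul_smul, mul_inv_cancel₀ hlam, one_smul]
        exact hw1
    exact ⟨⟨x, hx⟩, rfl⟩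

end Main


/-- For a densely defined closed operator `T` and `λ ≠ 0`, the geometric
multiplicity of `λ` as an eigenvalue of the block operator `E = [[0,T*],[T,0]]` equals the
geometric multiplicity of `λ²` as an eigenvalue of `T T*`, and also equals the geometric
multiplicity of `λ²` as an eigenvalue of `T* T` (dimensions of eigenspaces, possibly
infinite). -/
theorem blockOp_eigenspace_rank_eq
    [TopologicalSpace.SeparableSpace H₁] [TopologicalSpace.SeparableSpace H₂]
    (T : H₁ →ₗ.[ℂ] H₂) (hdense : Dense (T.domain : Set H₁)) (hclosed : T.IsClosed)
    (lam : ℂ) (hlam : lam ≠ 0) :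
    Module.rank ℂ ((blockOp T).eigenspace lam) =
        Module.rank ℂ (eigenspaceTTstar T (lam ^ 2)) ∧
      Module.rank ℂ ((blockOp T).eigenspace lam) =
        Module.rank ℂ (eigenspaceTstarT T (lam ^ 2)) := by
  exact ⟨(LinearEquiv.ofBijective _ (sndMap_bijective T lam hlam)).rank_eq,
    (LinearEquiv.ofBijective _ (fstMap_bijective T lam hlam)).rank_eq⟩
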